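/- Let A ∈ GL_N(ℚ̄) with det(A) = 1 or det(A) = −1, and let I_N be the N × N identity matrix. Then 𝓗(A + I_N) ≤ 2 𝓗(A) and 𝓗(A − I_N) ≤ 2 𝓗(A). -/

import Mathlib

open scoped BigOperators
open Matrix NumberField

noncomputable section

abbrev Qbar : Type := AlgebraicClosure ℚ

/-- The absolute (multiplicative) Weil height of a vector with entries in `Qbar`,
computed over the number field generated by its coordinates: the product of the
archimedean local factors `(∑ ‖x_i‖_v²)^{d_v/2}` and the non-archimedean part
(the inverse of the absolute norm of the fractional ideal generated by the
coordinates), all raised to the power `1/[K:ℚ]`. -/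
noncomputable def vecHeight {ι : Type} [Fintype ι] (x : ι → Qbar) : ℝ :=
  letI K := IntermediateField.adjoin ℚ (Set.range x)
  haveI : Finite (Set.range x) := Set.finite_range x
  haveI : FiniteDimensional ℚ K :=
    IntermediateField.finiteDimensional_adjoin fun a _ =>
      ((AlgebraicClosure.isAlgebraic ℚ).isAlgebraic a).isIntegral
  haveI : CharZero K := charZero_of_injective_algebraMap (algebraMap ℚ K).injective
  haveI : NumberField K := {}
  letI x' : ι → K := fun i => ⟨x i, IntermediateField.subset_adjoin ℚ _ ⟨i, rfl⟩⟩
  ((∏ w : InfinitePlace K, (∑ i, (w (x' i)) ^ 2) ^ ((w.mult : ℝ) / 2)) *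
      (((FractionalIdeal.absNorm
        (FractionalIdeal.spanFinset (𝓞 K) Finset.univ x') : ℚ) : ℝ))⁻¹) ^
    (((Module.finrank ℚ K : ℝ))⁻¹)

/-- The inhomogeneous height `h(x) = H(1,x)`. -/
noncomputable def vecHeight' {ι : Type} [Fintype ι] (x : ι → Qbar) : ℝ :=
  vecHeight (fun o : Option ι => o.elim 1 x)

/-- The height of an `N × J` matrix over `Qbar`: the height of the vector of its
`J × J` minors (Grassmann coordinates of its column span). -/
noncomputable def matHeight {N J : ℕ} (X : Matrix (Fin N) (Fin J) Qbar) : ℝ :=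
  vecHeight (fun s : {s : Finset (Fin N) // s.card = J} =>
    (X.submatrix (fun i => ((s.1.orderIsoOfFin s.2) i : Fin N)) id).det)

/-- The height of a subspace of `Qbar^N`: the height of the wedge product of a
basis, i.e. of the matrix whose columns form a basis. -/
noncomputable def subHeight {N : ℕ} (V : Submodule Qbar (Fin N → Qbar)) : ℝ :=
  matHeight (Matrix.of fun i j => ((Module.finBasis Qbar V) j : Fin N → Qbar) i)

/-- The height `𝓗` of a matrix viewed as a vector of its entries. -/
noncomputable def entHeight {N M : ℕ} (A : Matrix (Fin N) (Fin M) Qbar) : ℝ :=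
  vecHeight (fun p : Fin N × Fin M => A p.1 p.2)

/-- The symmetric bilinear form associated to the matrix `F`. -/
noncomputable def bilin {N : ℕ} (F : Matrix (Fin N) (Fin N) Qbar)
    (x y : Fin N → Qbar) : Qbar :=
  x ⬝ᵥ F.mulVec y

/-- The bilinear space `(Z,F)` is regular. -/
def RegularOn {N : ℕ} (F : Matrix (Fin N) (Fin N) Qbar)
    (Z : Submodule Qbar (Fin N → Qbar)) : Prop :=
  ∀ x ∈ Z, x ≠ 0 → ∃ y ∈ Z, bilin F x y ≠ 0

/-- A subspace is totally isotropic for `F`. -/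
def TotIsotropic {N : ℕ} (F : Matrix (Fin N) (Fin N) Qbar)
    (W : Submodule Qbar (Fin N → Qbar)) : Prop :=
  ∀ x ∈ W, ∀ y ∈ W, bilin F x y = 0

/-! At an archimedean place, a complex matrix `B` with `‖det B‖ = 1` has Frobenius norm at least
`√N` (AM-GM on the eigenvalues of `Bᴴ * B`), so `‖B ± 1‖ ≤ ‖B‖ + √N ≤ 2 ‖B‖`. At the finite
places, `det A = ±1` lies in `I ^ N` for the fractional ideal `I` generated by the entries of `A`,
which forces `1 ∈ I`; so the entries of `A ± 1` generate a smaller ideal, of larger norm. Taking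
the product over all places gives the factor `2`. -/

namespace Matrix

open scoped ComplexOrder

variable {m n : Type*} [Fintype m] [Fintype n]

attribute [local instance] Matrix.frobeniusNormedAddCommGroup Matrix.frobeniusNormedSpace

theorem frobenius_norm_sq_eq_sum {α : Type*} [NormedAddCommGroup α] (A : Matrix m n α) :
    ‖A‖ ^ 2 = ∑ i, ∑ j, ‖A i j‖ ^ 2 := by
  rw [frobenius_norm_def, ← Real.rpow_natCast, ← Real.rpow_mul (by positivity)]
  norm_num

theorem frobenius_norm_sq_eq_trace {𝕜 : Type*} [RCLike 𝕜] (A : Matrix m n 𝕜) :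
    ((‖A‖ ^ 2 : ℝ) : 𝕜) = (Aᴴ * A).trace := by
  rw [frobenius_norm_sq_eq_sum, Finset.sum_comm]
  simp [Matrix.trace, Matrix.mul_apply, RCLike.conj_mul]

variable [DecidableEq n]

theorem frobenius_norm_one {α : Type*} [NormedAddCommGroup α] [One α] :
    ‖(1 : Matrix n n α)‖ = √(Fintype.card n : ℝ) * ‖(1 : α)‖ := by
  simpa using congrArg NNReal.toReal (frobenius_nnnorm_one (n := n) (α := α))

/-- AM-GM for the eigenvalues of `Bᴴ * B`: their product is `‖det B‖ ^ 2` and their sum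
is `‖B‖ ^ 2`. -/
theorem sqrt_card_le_frobenius_norm {B : Matrix n n ℂ} (hB : ‖B.det‖ = 1) :
    √(Fintype.card n : ℝ) ≤ ‖B‖ := by
  rcases isEmpty_or_nonempty n with hn | hn
  · simp
  have hH := posSemidef_conjTranspose_mul_self B
  have hμ : ∀ i, 0 ≤ hH.1.eigenvalues i := hH.eigenvalues_nonneg
  have hprod : ∏ i, hH.1.eigenvalues i = 1 := by
    apply RCLike.ofReal_injective (K := ℂ)
    rw [RCLike.ofReal_prod, ← hH.1.det_eq_prod_eigenvalues, det_mul, det_conjTranspose,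
      RCLike.star_def, RCLike.conj_mul, hB]
    norm_num
  have hsum : ‖B‖ ^ 2 = ∑ i, hH.1.eigenvalues i := by
    apply RCLike.ofReal_injective (K := ℂ)
    rw [frobenius_norm_sq_eq_trace, hH.1.trace_eq_sum_eigenvalues, RCLike.ofReal_sum]
  have hcard : (0 : ℝ) < Fintype.card n := by exact_mod_cast Fintype.card_pos
  have amgm := Real.geom_mean_le_arith_mean_weighted Finset.univ
    (fun _ => (Fintype.card n : ℝ)⁻¹) hH.1.eigenvalues
    (fun _ _ => by positivity) (by simp [hcard.ne']) (fun i _ => hμ i)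
  rw [Real.finsetProd_rpow _ _ (fun i _ => hμ i), hprod, Real.one_rpow, ← Finset.mul_sum,
    ← hsum, le_inv_mul_iff₀ hcard, mul_one] at amgm
  rw [← Real.sqrt_sq (norm_nonneg B)]
  exact Real.sqrt_le_sqrt amgm

theorem frobenius_norm_add_smul_one_le {B : Matrix n n ℂ} (hB : ‖B.det‖ = 1) {ε : ℂ}
    (hε : ‖ε‖ ≤ 1) : ‖B + ε • 1‖ ≤ 2 * ‖B‖ :=
  calc ‖B + ε • 1‖ ≤ ‖B‖ + ‖ε‖ * ‖(1 : Matrix n n ℂ)‖ :=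
        (norm_add_le _ _).trans_eq (by rw [norm_smul])
    _ ≤ ‖B‖ + 1 * √(Fintype.card n : ℝ) := by
        rw [frobenius_norm_one, norm_one, mul_one]
        gcongr
    _ ≤ 2 * ‖B‖ := by linarith [sqrt_card_le_frobenius_norm hB]

end Matrix

namespace Submodule

theorem prod_mem_pow {R A ι : Type*} [CommSemiring R] [CommSemiring A] [Algebra R A]
    {M : Submodule R A} {s : Finset ι} {f : ι → A} (hf : ∀ i ∈ s, f i ∈ M) :
    ∏ i ∈ s, f i ∈ M ^ s.card := by
  classical
  induction s using Finset.cons_induction with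
  | empty => simpa using one_le.mp (le_refl (1 : Submodule R A))
  | cons a s ha ih =>
    rw [Finset.prod_cons, Finset.card_cons, pow_succ']
    exact mul_mem_mul (hf a (Finset.mem_cons_self a s))
      (ih fun i hi => hf i (Finset.mem_cons_of_mem hi))

theorem det_mem_pow {R A n : Type*} [CommRing R] [CommRing A] [Algebra R A] [Fintype n]
    [DecidableEq n] {M : Submodule R A} {B : Matrix n n A} (hB : ∀ i j, B i j ∈ M) :
    B.det ∈ M ^ Fintype.card n := by
  rw [det_apply]
  refine sum_mem fun σ _ => ?_
  rw [Units.smul_def]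
  exact zsmul_mem (prod_mem_pow fun i _ => hB (σ i) i) _

end Submodule

namespace FractionalIdeal

open scoped nonZeroDivisors

section IsDedekindDomain

variable {R K : Type*} [CommRing R] [IsDedekindDomain R] [Field K] [Algebra R K]
  [IsFractionRing R K]

/-- Every `z ∈ I⁻¹` has `z ^ n ∈ (I ^ n)⁻¹ ≤ 1`, so it is integral over `R`, hence in `R`. -/
theorem one_le_of_one_le_pow {I : FractionalIdeal R⁰ K} {n : ℕ} (hn : n ≠ 0) (h : 1 ≤ I ^ n) :
    1 ≤ I := by
  have hI : I ≠ 0 := by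
    rintro rfl
    simp [zero_pow hn] at h
  have hinv : I⁻¹ ≤ 1 := by
    intro z hz
    have hzpow : z ^ n ∈ I⁻¹ ^ n := by
      rw [← mem_coe, coe_pow]
      exact Submodule.pow_mem_pow _ hz n
    have hzn : z ^ n ∈ (1 : FractionalIdeal R⁰ K) := by
      have := mul_mem_mul hzpow (one_le.mp h)
      rwa [mul_one, ← mul_pow, inv_mul_cancel₀ hI, one_pow] at this
    obtain ⟨y, hy⟩ := (mem_one_iff _).mp hzn
    have hint : IsIntegral R z :=
      ⟨Polynomial.X ^ n - Polynomial.C y, Polynomial.monic_X_pow_sub_C _ hn, by simp [hy]⟩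
    obtain ⟨y', hy'⟩ := IsIntegrallyClosed.isIntegral_iff.mp hint
    exact (mem_one_iff _).mpr ⟨y', hy'⟩
  calc 1 = I * I⁻¹ := (mul_inv_cancel₀ hI).symm
    _ ≤ I * 1 := mul_le_mul_right hinv I
    _ = I := mul_one I

theorem spanFinset_entries_add_zsmul_one_le {n : Type*} [Fintype n] [DecidableEq n]
    {A : Matrix n n K} (hdet : A.det = 1 ∨ A.det = -1) (ε : ℤ) :
    spanFinset R Finset.univ (fun p : n × n => (A + ε • 1) p.1 p.2) ≤
      spanFinset R Finset.univ (fun p : n × n => A p.1 p.2) := by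
  set I := spanFinset R Finset.univ (fun p : n × n => A p.1 p.2)
  have hA : ∀ i j, A i j ∈ (I : Submodule R K) := fun i j => by
    rw [spanFinset_coe]
    exact Submodule.subset_span ⟨(i, j), Finset.mem_coe.mpr (Finset.mem_univ _), rfl⟩
  have hpow : 1 ≤ I ^ Fintype.card n := by
    rw [one_le, ← mem_coe, coe_pow]
    rcases hdet with h | h
    · exact h ▸ Submodule.det_mem_pow hA
    · simpa [h] using Submodule.neg_mem _ (Submodule.det_mem_pow hA)
  rw [← coe_le_coe, spanFinset_coe, Submodule.span_le]
  rintro _ ⟨⟨i, j⟩, -, rfl⟩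
  refine Submodule.add_mem _ (hA i j) (Submodule.smul_of_tower_mem _ ε ?_)
  rw [Matrix.one_apply]
  split_ifs
  · exact mem_coe.mpr (one_le.mp (one_le_of_one_le_pow (Fintype.card_pos_iff.mpr ⟨i⟩).ne' hpow))
  · exact Submodule.zero_mem _

end IsDedekindDomain

theorem absNorm_le_absNorm_of_le {R K : Type*} [CommRing R] [IsDedekindDomain R]
    [Module.Free ℤ R] [Module.Finite ℤ R] [Field K] [Algebra R K] [IsFractionRing R K]
    {I J : FractionalIdeal R⁰ K} (hJ : J ≠ 0) (h : J ≤ I) : absNorm I ≤ absNorm J := by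
  have hI : I ≠ 0 := ne_bot_of_le_ne_bot hJ h
  obtain ⟨a, ha⟩ := le_one_iff_exists_coeIdeal.mp <|
    (mul_le_mul_right h I⁻¹).trans_eq (inv_mul_cancel₀ hI)
  have hJa : J = I * a := by rw [ha, ← mul_assoc, mul_inv_cancel₀ hI, one_mul]
  have ha0 : a ≠ ⊥ := by
    rintro rfl
    simp [hJa] at hJ
  have h1a : (1 : ℚ) ≤ Ideal.absNorm a := by
    exact_mod_cast Nat.one_le_iff_ne_zero.mpr (mt Ideal.absNorm_eq_zero_iff.mp ha0)
  rw [hJa, map_mul, coeIdeal_absNorm]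
  exact le_mul_of_one_le_right (absNorm_nonneg I) h1a

end FractionalIdeal

namespace NumberField

attribute [local instance] Matrix.frobeniusNormedAddCommGroup in
theorem sum_sq_infinitePlace_entries_eq_frobenius_norm_sq {K m n : Type*} [Field K] [Fintype m]
    [Fintype n] (w : InfinitePlace K) (A : Matrix m n K) :
    ∑ p : m × n, w (A p.1 p.2) ^ 2 = ‖A.map w.embedding‖ ^ 2 := by
  simp [Matrix.frobenius_norm_sq_eq_sum, Fintype.sum_prod_type, InfinitePlace.norm_embedding_eq]

variable {K : Type*} [Field K] [NumberField K] {ι : Type*} [Fintype ι]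

def archFactor (x : ι → K) : ℝ :=
  ∏ w : InfinitePlace K, (∑ i, w (x i) ^ 2) ^ ((w.mult : ℝ) / 2)

def spanNorm (x : ι → K) : ℝ :=
  (FractionalIdeal.absNorm (FractionalIdeal.spanFinset (𝓞 K) Finset.univ x) : ℚ)

def vecHeightIn (x : ι → K) : ℝ :=
  (archFactor x * (spanNorm x)⁻¹) ^ ((Module.finrank ℚ K : ℝ)⁻¹)

theorem archFactor_nonneg (x : ι → K) : 0 ≤ archFactor x := by
  unfold archFactor
  positivity

theorem spanNorm_pos {x : ι → K} (hx : FractionalIdeal.spanFinset (𝓞 K) Finset.univ x ≠ 0) :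
    0 < spanNorm x := by
  have := (FractionalIdeal.absNorm_nonneg _).lt_of_ne' <|
    mt FractionalIdeal.absNorm_eq_zero_iff.mp hx
  rw [spanNorm]
  exact_mod_cast this

theorem spanNorm_le_spanNorm {x y : ι → K}
    (hy : FractionalIdeal.spanFinset (𝓞 K) Finset.univ y ≠ 0)
    (h : FractionalIdeal.spanFinset (𝓞 K) Finset.univ y ≤
      FractionalIdeal.spanFinset (𝓞 K) Finset.univ x) :
    spanNorm x ≤ spanNorm y := by
  rw [spanNorm, spanNorm]
  exact_mod_cast FractionalIdeal.absNorm_le_absNorm_of_le hy h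

theorem vecHeightIn_nonneg (x : ι → K) : 0 ≤ vecHeightIn x := by
  have := archFactor_nonneg x
  have : (0 : ℝ) ≤ spanNorm x := by
    rw [spanNorm]
    exact_mod_cast FractionalIdeal.absNorm_nonneg (FractionalIdeal.spanFinset (𝓞 K) _ x)
  unfold vecHeightIn
  positivity

/-- The exponents `w.mult` add up to `[K : ℚ]`. -/
theorem archFactor_le_pow_mul {x y : ι → K} {c : ℝ} (hc : 0 ≤ c)
    (h : ∀ w : InfinitePlace K, ∑ i, w (y i) ^ 2 ≤ c ^ 2 * ∑ i, w (x i) ^ 2) :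
    archFactor y ≤ c ^ Module.finrank ℚ K * archFactor x := by
  have hfactor : ∀ w : InfinitePlace K, ∀ s : ℝ, 0 ≤ s →
      (c ^ 2 * s) ^ ((w.mult : ℝ) / 2) = c ^ w.mult * s ^ ((w.mult : ℝ) / 2) := by
    intro w s hs
    rw [Real.mul_rpow (by positivity) hs, ← Real.rpow_natCast c 2, ← Real.rpow_mul hc,
      ← Real.rpow_natCast c w.mult]
    congr 2
    push_cast
    ring
  calc archFactor y ≤ ∏ w : InfinitePlace K, (c ^ 2 * ∑ i, w (x i) ^ 2) ^ ((w.mult : ℝ) / 2) :=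
        Finset.prod_le_prod (fun w _ => by positivity) fun w _ => by gcongr; exact h w
    _ = c ^ Module.finrank ℚ K * archFactor x := by
        rw [Finset.prod_congr rfl fun w _ => hfactor w _ (by positivity), Finset.prod_mul_distrib,
          Finset.prod_pow_eq_pow_sum, InfinitePlace.sum_mult_eq, archFactor]

theorem vecHeightIn_le_mul {x y : ι → K} {c : ℝ} (hc : 0 ≤ c)
    (harch : ∀ w : InfinitePlace K, ∑ i, w (y i) ^ 2 ≤ c ^ 2 * ∑ i, w (x i) ^ 2)
    (hspan : FractionalIdeal.spanFinset (𝓞 K) Finset.univ y ≤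
      FractionalIdeal.spanFinset (𝓞 K) Finset.univ x) :
    vecHeightIn y ≤ c * vecHeightIn x := by
  have hd : (0 : ℝ) < Module.finrank ℚ K := by exact_mod_cast Module.finrank_pos
  by_cases hy : FractionalIdeal.spanFinset (𝓞 K) Finset.univ y = 0
  · have : vecHeightIn y = 0 := by simp [vecHeightIn, spanNorm, hy, hd.ne']
    rw [this]
    exact mul_nonneg hc (vecHeightIn_nonneg x)
  have hNx := spanNorm_pos (ne_bot_of_le_ne_bot hy hspan)
  have hNxy := spanNorm_le_spanNorm hy hspan
  have hPx := archFactor_nonneg x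
  have hPy := archFactor_nonneg y
  have hpow : (c ^ Module.finrank ℚ K) ^ ((Module.finrank ℚ K : ℝ)⁻¹) = c := by
    rw [← Real.rpow_natCast, ← Real.rpow_mul hc, mul_inv_cancel₀ hd.ne', Real.rpow_one]
  calc vecHeightIn y
      ≤ (c ^ Module.finrank ℚ K * archFactor x * (spanNorm x)⁻¹) ^
          ((Module.finrank ℚ K : ℝ)⁻¹) :=
        Real.rpow_le_rpow (mul_nonneg hPy (inv_nonneg.mpr (hNx.trans_le hNxy).le))
          (mul_le_mul (archFactor_le_pow_mul hc harch) (inv_anti₀ hNx hNxy)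
            (inv_nonneg.mpr (hNx.trans_le hNxy).le) (mul_nonneg (pow_nonneg hc _) hPx))
          (by positivity)
    _ = c * vecHeightIn x := by
        rw [vecHeightIn, mul_assoc, Real.mul_rpow (by positivity)
          (mul_nonneg hPx (inv_nonneg.mpr hNx.le)), hpow]

attribute [local instance] Matrix.frobeniusNormedAddCommGroup in
theorem vecHeightIn_entries_add_zsmul_one_le {n : Type*} [Fintype n] [DecidableEq n]
    {A : Matrix n n K} (hdet : A.det = 1 ∨ A.det = -1) {ε : ℤ} (hε : |ε| ≤ 1) :
    vecHeightIn (fun p : n × n => (A + ε • 1) p.1 p.2) ≤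
      2 * vecHeightIn (fun p : n × n => A p.1 p.2) := by
  refine vecHeightIn_le_mul zero_le_two (fun w => ?_)
    (FractionalIdeal.spanFinset_entries_add_zsmul_one_le hdet ε)
  have hmap : (A + ε • 1).map w.embedding = A.map w.embedding + (ε : ℂ) • 1 := by
    simp [← RingHom.mapMatrix_apply, Int.cast_smul_eq_zsmul]
  have hB : ‖(A.map w.embedding).det‖ = 1 := by
    rw [← RingHom.mapMatrix_apply, ← RingHom.map_det]
    rcases hdet with h | h <;> simp [h]
  have hε' : ‖(ε : ℂ)‖ ≤ 1 := by
    rw [Complex.norm_intCast]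
    exact_mod_cast hε
  rw [sum_sq_infinitePlace_entries_eq_frobenius_norm_sq,
    sum_sq_infinitePlace_entries_eq_frobenius_norm_sq, hmap, ← mul_pow]
  exact pow_le_pow_left₀ (norm_nonneg _) (Matrix.frobenius_norm_add_smul_one_le hB hε') 2

end NumberField

theorem IntermediateField.adjoin_range_eq_of_sub_mem_bot {F E ι : Type*} [Field F] [Field E]
    [Algebra F E] {f g : ι → E} (h : ∀ i, f i - g i ∈ (⊥ : IntermediateField F E)) :
    adjoin F (Set.range f) = adjoin F (Set.range g) := by
  have hle : ∀ f g : ι → E, (∀ i, f i - g i ∈ (⊥ : IntermediateField F E)) →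
      adjoin F (Set.range f) ≤ adjoin F (Set.range g) := by
    intro f g h
    rw [adjoin_le_iff]
    rintro _ ⟨i, rfl⟩
    simpa using add_mem (subset_adjoin F (Set.range g) ⟨i, rfl⟩)
      (bot_le (a := adjoin F (Set.range g)) (h i))
  exact le_antisymm (hle f g h) (hle g f fun i => by simpa using neg_mem (h i))

instance {L : IntermediateField ℚ Qbar} [FiniteDimensional ℚ L] : NumberField L := {}

theorem finiteDimensional_adjoin_range {ι : Type*} [Finite ι] (x : ι → Qbar) :
    FiniteDimensional ℚ (IntermediateField.adjoin ℚ (Set.range x)) :=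
  have : Finite (Set.range x) := Set.finite_range x
  IntermediateField.finiteDimensional_adjoin fun a _ =>
    ((AlgebraicClosure.isAlgebraic ℚ).isAlgebraic a).isIntegral

theorem vecHeight_eq_vecHeightIn {ι : Type} [Fintype ι] (x : ι → Qbar)
    {L : IntermediateField ℚ Qbar} [FiniteDimensional ℚ L]
    (h : IntermediateField.adjoin ℚ (Set.range x) = L) (hx : ∀ i, x i ∈ L) :
    vecHeight x = NumberField.vecHeightIn fun i => (⟨x i, hx i⟩ : L) := by
  subst h
  rfl

theorem entHeight_map_val_eq {N M : ℕ} {L : IntermediateField ℚ Qbar} [FiniteDimensional ℚ L]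
    (B : Matrix (Fin N) (Fin M) L)
    (h : IntermediateField.adjoin ℚ (Set.range fun p : Fin N × Fin M => (B p.1 p.2 : Qbar)) = L) :
    entHeight (B.map L.val) = NumberField.vecHeightIn fun p : Fin N × Fin M => B p.1 p.2 :=
  vecHeight_eq_vecHeightIn _ h fun p => (B p.1 p.2).2

theorem entHeight_add_zsmul_one_le {N : ℕ} {A : Matrix (Fin N) (Fin N) Qbar}
    (hdet : A.det = 1 ∨ A.det = -1) {ε : ℤ} (hε : |ε| ≤ 1) :
    entHeight (A + ε • 1) ≤ 2 * entHeight A := by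
  set L := IntermediateField.adjoin ℚ (Set.range fun p : Fin N × Fin N => A p.1 p.2)
  have : FiniteDimensional ℚ L := finiteDimensional_adjoin_range _
  let A' : Matrix (Fin N) (Fin N) L :=
    .of fun i j => ⟨A i j, IntermediateField.subset_adjoin ℚ _ ⟨(i, j), rfl⟩⟩
  have hA : A'.map L.val = A := rfl
  have hAε : (A' + ε • 1).map L.val = A + ε • 1 := by
    rw [← AlgHom.mapMatrix_apply, map_add, map_zsmul, map_one, AlgHom.mapMatrix_apply, hA]
  have hdet' : A'.det = 1 ∨ A'.det = -1 := by
    have h : L.val A'.det = A.det := by rw [AlgHom.map_det, AlgHom.mapMatrix_apply, hA]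
    rcases hdet with hd | hd
    · exact .inl (L.val.toRingHom.injective (by simpa [hd] using h))
    · exact .inr (L.val.toRingHom.injective (by simpa [hd] using h))
  have hadj : IntermediateField.adjoin ℚ
      (Set.range fun p : Fin N × Fin N => ((A' + ε • 1) p.1 p.2 : Qbar)) = L := by
    refine IntermediateField.adjoin_range_eq_of_sub_mem_bot fun p => ?_
    rw [show ((A' + ε • 1) p.1 p.2 : Qbar) = (A + ε • 1) p.1 p.2 from
      congrFun (congrFun hAε p.1) p.2, Matrix.add_apply, add_sub_cancel_left, Matrix.smul_apply]
    exact zsmul_mem (by rw [Matrix.one_apply]; split_ifs <;> simp) ε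
  calc entHeight (A + ε • 1) = entHeight ((A' + ε • 1).map L.val) := by rw [hAε]
    _ = NumberField.vecHeightIn fun p : Fin N × Fin N => (A' + ε • 1) p.1 p.2 :=
        entHeight_map_val_eq _ hadj
    _ ≤ 2 * NumberField.vecHeightIn fun p : Fin N × Fin N => A' p.1 p.2 :=
        NumberField.vecHeightIn_entries_add_zsmul_one_le hdet' hε
    _ = 2 * entHeight A := by rw [← hA, entHeight_map_val_eq A' rfl]

/-- Lemma 6.5: if `A ∈ GL_N(Qbar)` has determinant `±1`, then
`𝓗(A ± I_N) ≤ 2 𝓗(A)`. -/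
theorem height_add_identity (N : ℕ) (A : Matrix (Fin N) (Fin N) Qbar)
    (hdet : A.det = 1 ∨ A.det = -1) :
    entHeight (A + 1) ≤ 2 * entHeight A ∧ entHeight (A - 1) ≤ 2 * entHeight A :=
  ⟨by simpa using entHeight_add_zsmul_one_le hdet (ε := 1) le_rfl,
    by simpa [sub_eq_add_neg] using entHeight_add_zsmul_one_le hdet (ε := -1) le_rfl⟩

end
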